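/- Under the update sequence where the minimum-opinion agent always updates, the set S(t) = {i : x_i(t) < m + (1/k)(y(0) − m)}, where m = x_{μ(x(0))}(0) and y(0) = max_{i∈N_{μ(x(0))}} x_i(0), satisfies: either S(t) = ∅ or |S(t+1)| = |S(t)| − 1; since |S(0)| ≤ k − 1, the set S(k−1) is empty. -/

import Mathlib

/-!
When the minimal agent updates, its new opinion is the average of `k` opinions. The
neighbourhood `B` of the initial minimiser has the least sum among all `k`-element sets,
since every agent outside `B` sits at least as high as `y(0) = max_B x(0)`; and that sum is
at least `(k - 1) m + y(0) = k θ`, where `θ = m + (y(0) - m) / k` is the threshold.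
Opinions never decrease along the trajectory, so every `k`-element set keeps sum at least
`k θ`, and each updated agent lands at or above `θ`. Hence every step removes exactly the
current minimiser from `S`, which lies in `S` whenever `S` is nonempty. Finally `S(0)`
lies in `B` minus the agent attaining `y(0)`, so it has at most `k - 1` elements.
-/

open scoped Classical
open Finset

noncomputable def nearList {n : ℕ} (x : Fin n → ℝ) (i : Fin n) : List (Fin n) :=
  @List.insertionSort (Fin n)
    (fun j j' => |x j - x i| < |x j' - x i| ∨ (|x j - x i| = |x j' - x i| ∧ j ≤ j'))
    (Classical.decRel _) (List.finRange n)

/-- The set of the `k` agents nearest to `i` in opinion distance (ties broken by lower index). -/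
noncomputable def nbr {n : ℕ} (k : ℕ) (x : Fin n → ℝ) (i : Fin n) : Finset (Fin n) :=
  ((nearList x i).take k).toFinset

/-- The asynchronous update `f(x,i)`. -/
noncomputable def upd {n : ℕ} (k : ℕ) (x : Fin n → ℝ) (i : Fin n) : Fin n → ℝ :=
  Function.update x i ((∑ j ∈ nbr k x i, x j) / k)

/-- A configuration is clustered if all neighbors of every agent share its opinion. -/
def Clustered {n : ℕ} (k : ℕ) (x : Fin n → ℝ) : Prop :=
  ∀ i : Fin n, ∀ j ∈ nbr k x i, x j = x i

/-- `μ(x)`: lowest index attaining the minimum. -/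
noncomputable def argminIdx {n : ℕ} [NeZero n] (x : Fin n → ℝ) : Fin n :=
  (Finset.univ.filter fun i => ∀ j, x i ≤ x j).min' (by
    obtain ⟨i, -, hi⟩ := Finset.exists_min_image Finset.univ x Finset.univ_nonempty
    exact ⟨i, Finset.mem_filter.mpr ⟨Finset.mem_univ _, fun j => hi j (Finset.mem_univ j)⟩⟩)

/-- `M(x)`: lowest index attaining the maximum. -/
noncomputable def argmaxIdx {n : ℕ} [NeZero n] (x : Fin n → ℝ) : Fin n :=
  argminIdx (fun i => -x i)

/-- Trajectory of the dynamics with (possibly state-dependent) update selector `σ`. -/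
noncomputable def traj {n : ℕ} (k : ℕ) (σ : ℕ → (Fin n → ℝ) → Fin n) (x0 : Fin n → ℝ) :
    ℕ → Fin n → ℝ
  | 0 => x0
  | t + 1 => upd k (traj k σ x0 t) (σ t (traj k σ x0 t))

theorem Finset.sum_le_sum_of_card_eq {ι M : Type*} [DecidableEq ι] [AddCommMonoid M]
    [LinearOrder M] [IsOrderedAddMonoid M] {s t : Finset ι} {f : ι → M} (hst : #s = #t)
    (h : ∀ a ∈ s \ t, ∀ b ∈ t \ s, f a ≤ f b) : ∑ j ∈ s, f j ≤ ∑ j ∈ t, f j := by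
  have hcard : #(s \ t) = #(t \ s) := card_sdiff_comm hst
  rw [← sum_inter_add_sum_sdiff s t, ← sum_inter_add_sum_sdiff t s, inter_comm]
  refine add_le_add le_rfl ?_
  obtain hempty | hne := (s \ t).eq_empty_or_nonempty
  · rw [hempty, card_empty, eq_comm, card_eq_zero] at hcard
    rw [hempty, hcard]
  · calc ∑ j ∈ s \ t, f j ≤ #(s \ t) • (s \ t).sup' hne f :=
          sum_le_card_nsmul _ _ _ fun a ha => le_sup' f ha
      _ = #(t \ s) • (s \ t).sup' hne f := by rw [hcard]
      _ ≤ ∑ j ∈ t \ s, f j :=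
          card_nsmul_le_sum _ _ _ fun b hb => sup'_le _ _ fun a ha => h a ha b hb

theorem Finset.add_card_sub_one_mul_le_sum {ι : Type*} {s : Finset ι} {f : ι → ℝ} {a : ι}
    {m : ℝ} (ha : a ∈ s) (hm : ∀ j ∈ s, m ≤ f j) : f a + (#s - 1 : ℝ) * m ≤ ∑ j ∈ s, f j := by
  classical
  have hcard : ((#(s.erase a) : ℕ) : ℝ) = #s - 1 := by
    rw [card_erase_of_mem ha, Nat.cast_pred (card_pos.mpr ⟨a, ha⟩)]
  rw [← add_sum_erase s f ha, ← hcard, ← nsmul_eq_mul]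
  exact add_le_add le_rfl (card_nsmul_le_sum _ _ _ fun j hj => hm j (mem_of_mem_erase hj))

theorem argminIdx_le {n : ℕ} [NeZero n] (x : Fin n → ℝ) (j : Fin n) : x (argminIdx x) ≤ x j :=
  (mem_filter.mp (min'_mem (univ.filter fun i => ∀ j, x i ≤ x j) _)).2 j

section NearestNeighbours

variable {n k : ℕ} (x : Fin n → ℝ) (i : Fin n)

def nearRel (j j' : Fin n) : Prop :=
  |x j - x i| < |x j' - x i| ∨ (|x j - x i| = |x j' - x i| ∧ j ≤ j')

theorem nearRel_iff {j j' : Fin n} :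
    nearRel x i j j' ↔ toLex (|x j - x i|, j) ≤ toLex (|x j' - x i|, j') := by
  rw [Prod.Lex.toLex_le_toLex]; rfl

instance : Std.Total (nearRel x i) :=
  ⟨fun a b => by simp only [nearRel_iff]; exact le_total _ _⟩

instance : IsTrans (Fin n) (nearRel x i) :=
  ⟨fun a b c => by simp only [nearRel_iff]; exact le_trans⟩

theorem nearList_eq_insertionSort :
    nearList x i = (List.finRange n).insertionSort (nearRel x i) := by
  unfold nearList nearRel
  congr 1

theorem nearList_perm : (nearList x i).Perm (List.finRange n) := by
  rw [nearList_eq_insertionSort]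
  exact List.perm_insertionSort _ _

theorem card_nbr (hkn : k ≤ n) : #(nbr k x i) = k := by
  have hnodup : (nearList x i).Nodup := (nearList_perm x i).nodup_iff.mpr (List.nodup_finRange n)
  rw [nbr, List.toFinset_card_of_nodup ((List.take_sublist _ _).nodup hnodup), List.length_take,
    (nearList_perm x i).length_eq, List.length_finRange, min_eq_left hkn]

theorem exists_mem_nbr_eq_sSup (hk : 0 < k) (hkn : k ≤ n) :
    ∃ a ∈ nbr k x i, x a = sSup (x '' (nbr k x i : Set (Fin n))) := by
  have hne : (nbr k x i).Nonempty := card_pos.mp (by rw [card_nbr x i hkn]; exact hk)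
  simpa [sup'_eq_csSup_image, eq_comm] using exists_mem_eq_sup' hne x

variable {x i}

theorem nearRel_of_mem_nbr_of_not_mem {a j : Fin n} (ha : a ∈ nbr k x i) (hj : j ∉ nbr k x i) :
    nearRel x i a j := by
  have hsplit := List.take_append_drop k (nearList x i)
  have hj' : j ∈ (nearList x i).drop k := by
    have : j ∈ (nearList x i).take k ++ (nearList x i).drop k := by
      rw [hsplit]; exact (nearList_perm x i).mem_iff.mpr (List.mem_finRange j)
    exact (List.mem_append.mp this).resolve_left fun h => hj (List.mem_toFinset.mpr h)
  have hsorted : ((nearList x i).take k ++ (nearList x i).drop k).Pairwise (nearRel x i) := by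
    rw [hsplit, nearList_eq_insertionSort]; exact List.pairwise_insertionSort _ _
  exact (List.pairwise_append.mp hsorted).2.2 a (List.mem_toFinset.mp ha) j hj'

theorem le_of_mem_nbr_of_not_mem (hi : ∀ p, x i ≤ x p) {a j : Fin n} (ha : a ∈ nbr k x i)
    (hj : j ∉ nbr k x i) : x a ≤ x j := by
  have hdist : |x a - x i| ≤ |x j - x i| := by
    rcases nearRel_of_mem_nbr_of_not_mem ha hj with h | ⟨h, -⟩
    exacts [h.le, h.le]
  rwa [abs_of_nonneg (sub_nonneg.mpr (hi a)), abs_of_nonneg (sub_nonneg.mpr (hi j)),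
    sub_le_sub_iff_right] at hdist

theorem sum_nbr_le_sum (hi : ∀ p, x i ≤ x p) (hkn : k ≤ n) {A : Finset (Fin n)} (hA : #A = k) :
    ∑ j ∈ nbr k x i, x j ≤ ∑ j ∈ A, x j :=
  sum_le_sum_of_card_eq (by rw [card_nbr x i hkn, hA]) fun a ha b hb =>
    le_of_mem_nbr_of_not_mem hi (mem_sdiff.mp ha).1 (mem_sdiff.mp hb).2

end NearestNeighbours

noncomputable def threshold {n : ℕ} [NeZero n] (k : ℕ) (x : Fin n → ℝ) : ℝ :=
  x (argminIdx x) +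
    1 / (k : ℝ) * (sSup (x '' (nbr k x (argminIdx x) : Set (Fin n))) - x (argminIdx x))

section Threshold

variable {n k : ℕ} [NeZero n]

theorem threshold_le_of_mem_nbr_eq_sSup (hk : 0 < k) {x : Fin n → ℝ} {a : Fin n}
    (ha : x a = sSup (x '' (nbr k x (argminIdx x) : Set (Fin n)))) : threshold k x ≤ x a := by
  have hk' : 1 / (k : ℝ) ≤ 1 := div_le_one_of_le₀ (by exact_mod_cast hk) (by positivity)
  rw [threshold, ← ha]
  linarith [mul_le_of_le_one_left (sub_nonneg.mpr (argminIdx_le x a)) hk']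

theorem mul_threshold_le_sum (hk : 0 < k) (hkn : k ≤ n) (x : Fin n → ℝ) {A : Finset (Fin n)}
    (hA : #A = k) : k * threshold k x ≤ ∑ j ∈ A, x j := by
  obtain ⟨a, ha, hmax⟩ := exists_mem_nbr_eq_sSup x (argminIdx x) hk hkn
  have hk' : (k : ℝ) ≠ 0 := by exact_mod_cast hk.ne'
  calc k * threshold k x = x a + (k - 1 : ℝ) * x (argminIdx x) := by
        rw [threshold, ← hmax]; field_simp; ring
    _ = x a + (#(nbr k x (argminIdx x)) - 1 : ℝ) * x (argminIdx x) := by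
        rw [card_nbr x _ hkn]
    _ ≤ ∑ j ∈ nbr k x (argminIdx x), x j :=
        add_card_sub_one_mul_le_sum ha fun j _ => argminIdx_le x j
    _ ≤ ∑ j ∈ A, x j := sum_nbr_le_sum (argminIdx_le x) hkn hA

theorem card_filter_lt_threshold_le (hk : 0 < k) (hkn : k ≤ n) (x : Fin n → ℝ) :
    #{i | x i < threshold k x} ≤ k - 1 := by
  obtain ⟨a, ha, hmax⟩ := exists_mem_nbr_eq_sSup x (argminIdx x) hk hkn
  have hT := threshold_le_of_mem_nbr_eq_sSup hk hmax
  have hsub : ({i | x i < threshold k x} : Finset (Fin n)) ⊆ (nbr k x (argminIdx x)).erase a := by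
    intro j hj
    have hj : x j < x a := hT.trans_lt' (mem_filter.mp hj).2
    refine mem_erase.mpr ⟨fun h => (h ▸ hj).false, ?_⟩
    by_contra hjB
    exact (le_of_mem_nbr_of_not_mem (argminIdx_le x) ha hjB).not_gt hj
  calc #{i | x i < threshold k x} ≤ #((nbr k x (argminIdx x)).erase a) := card_le_card hsub
    _ = k - 1 := by rw [card_erase_of_mem ha, card_nbr x _ hkn]

end Threshold

section MinimumUpdate

variable {n k : ℕ} [NeZero n]

noncomputable abbrev minTraj (k : ℕ) (x0 : Fin n → ℝ) : ℕ → Fin n → ℝ :=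
  traj k (fun _ x => argminIdx x) x0

theorem le_upd_argminIdx (hk : 0 < k) (hkn : k ≤ n) (x : Fin n → ℝ) :
    x ≤ upd k x (argminIdx x) := by
  intro j
  rcases eq_or_ne j (argminIdx x) with rfl | hj
  · rw [upd, Function.update_self, le_div_iff₀ (Nat.cast_pos.mpr hk), mul_comm]
    have := card_nsmul_le_sum (nbr k x (argminIdx x)) x _ fun p _ => argminIdx_le x p
    rwa [card_nbr x _ hkn, nsmul_eq_mul] at this
  · rw [upd, Function.update_of_ne hj]

theorem monotone_minTraj (hk : 0 < k) (hkn : k ≤ n) (x0 : Fin n → ℝ) :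
    Monotone (minTraj k x0) :=
  monotone_nat_of_le_succ fun _ => le_upd_argminIdx hk hkn _

theorem threshold_le_avg_nbr_minTraj (hk : 0 < k) (hkn : k ≤ n) (x0 : Fin n → ℝ) (t : ℕ) :
    threshold k x0 ≤
      (∑ j ∈ nbr k (minTraj k x0 t) (argminIdx (minTraj k x0 t)), minTraj k x0 t j) / k := by
  rw [le_div_iff₀ (Nat.cast_pos.mpr hk), mul_comm]
  calc k * threshold k x0
      ≤ ∑ j ∈ nbr k (minTraj k x0 t) (argminIdx (minTraj k x0 t)), x0 j :=
        mul_threshold_le_sum hk hkn x0 (card_nbr _ _ hkn)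
    _ ≤ _ := sum_le_sum fun j _ => monotone_minTraj hk hkn x0 (Nat.zero_le t) j

theorem card_filter_upd_argminIdx_lt {x : Fin n → ℝ} {T : ℝ}
    (hT : T ≤ (∑ j ∈ nbr k x (argminIdx x), x j) / k) :
    #{i | upd k x (argminIdx x) i < T} = #{i | x i < T} - 1 := by
  have hstep : ({i | upd k x (argminIdx x) i < T} : Finset (Fin n)) =
      ({i | x i < T} : Finset (Fin n)).erase (argminIdx x) := by
    ext j
    rw [mem_filter_univ, mem_erase, mem_filter_univ, upd]
    rcases eq_or_ne j (argminIdx x) with rfl | hj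
    · simpa only [Function.update_self, ne_eq, not_true_eq_false, false_and, iff_false, not_lt]
    · simp only [Function.update_of_ne hj, ne_eq, hj, not_false_eq_true, true_and]
  rw [hstep]
  rcases ({i | x i < T} : Finset (Fin n)).eq_empty_or_nonempty with h | ⟨j, hj⟩
  · simp [h]
  · refine card_erase_of_mem (mem_filter.mpr ⟨mem_univ _, ?_⟩)
    exact (argminIdx_le x j).trans_lt (mem_filter.mp hj).2

end MinimumUpdate

/-- when the minimum-opinion agent always updates, the set of agents below
the threshold `m + (1/k)(y(0) - m)` loses one element per step (unless empty), starts with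
at most `k-1` elements and is empty at time `k-1`. -/
theorem min_update_S_empties {n k : ℕ} [NeZero n] (hk : 1 ≤ k) (hkn : k ≤ n)
    (x0 : Fin n → ℝ) (X : ℕ → Fin n → ℝ)
    (hX : X = traj k (fun _ x => argminIdx x) x0)
    (y0 : ℝ) (hy0 : y0 = sSup (x0 '' (nbr k x0 (argminIdx x0) : Set (Fin n))))
    (S : ℕ → Finset (Fin n))
    (hS : ∀ t, S t = Finset.univ.filter fun i =>
      X t i < x0 (argminIdx x0) + (1 / (k : ℝ)) * (y0 - x0 (argminIdx x0))) :
    (∀ t, S t = ∅ ∨ (S (t + 1)).card = (S t).card - 1) ∧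
    (S 0).card ≤ k - 1 ∧ S (k - 1) = ∅ := by
  subst hX hy0
  have hS' : ∀ t, S t = ({i | minTraj k x0 t i < threshold k x0} : Finset (Fin n)) := hS
  have hstep : ∀ t, #(S (t + 1)) = #(S t) - 1 := fun t => by
    rw [hS', hS']
    exact card_filter_upd_argminIdx_lt (threshold_le_avg_nbr_minTraj hk hkn x0 t)
  have hcard : ∀ t, #(S t) = #(S 0) - t := by
    intro t
    induction t with
    | zero => rfl
    | succ t ih => rw [hstep, ih, Nat.sub_sub]
  have hS0 : #(S 0) ≤ k - 1 := by
    rw [hS']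
    exact card_filter_lt_threshold_le hk hkn x0
  refine ⟨fun t => Or.inr (hstep t), hS0, card_eq_zero.mp ?_⟩
  rw [hcard]
  omega
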